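/- (Lemma 3.3, bounded case.) Under the Galerkin setup, spectral pollution occurs in Δ, i.e. δ(L_n(Δ), L(Δ)) does not converge to 0 as n → ∞, if and only if there exists a strictly increasing sequence of indices (n_j) such that dim L_{n_j}(Δ) > dim L(Δ) = d for every j. -/

import Mathlib

open Filter Metric
open scoped InnerProductSpace

noncomputable section

variable {H : Type*} [NormedAddCommGroup H] [InnerProductSpace ℂ H] [CompleteSpace H]

/-- `δ(L, M)`: the supremum over unit vectors `u ∈ L` of `dist(u, M)`
(interpreted as `0` when `L` has no unit vectors). -/
def subDelta (L M : Submodule ℂ H) : ℝ :=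
  sSup ((fun u => Metric.infDist u (M : Set H)) '' {u : H | u ∈ L ∧ ‖u‖ = 1})

/-- `δ̂(L, M) = max (δ(L,M), δ(M,L))`. -/
def subDeltaHat (L M : Submodule ℂ H) : ℝ := max (subDelta L M) (subDelta M L)

/-- `u` is a Galerkin eigenvector of `A` relative to the subspace `L` with eigenvalue `μ`:
`u ∈ L`, `u ≠ 0` and `⟨A u, v⟩ = μ ⟨u, v⟩` for all `v ∈ L`. -/
def IsGalerkinEigenpair (A : H →L[ℂ] H) (L : Submodule ℂ H) (μ : ℝ) (u : H) : Prop :=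
  u ∈ L ∧ u ≠ 0 ∧ ∀ v ∈ L, ⟪A u, v⟫_ℂ = (μ : ℂ) * ⟪u, v⟫_ℂ

/-- `σ(A, L)`: the Galerkin eigenvalues of `A` relative to `L`. -/
def galerkinSpectrum (A : H →L[ℂ] H) (L : Submodule ℂ H) : Set ℝ :=
  {μ | ∃ u, IsGalerkinEigenpair A L μ u}

/-- `L(Δ)`-type subspace: the span of the Galerkin eigenvectors of `A` relative to `L`
whose eigenvalues lie in `[a, b]`. -/
def galerkinSubspace (A : H →L[ℂ] H) (L : Submodule ℂ H) (a b : ℝ) : Submodule ℂ H :=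
  Submodule.span ℂ {u | ∃ μ ∈ Set.Icc a b, IsGalerkinEigenpair A L μ u}

/-- The span of the eigenvectors of `T` whose (real) eigenvalues lie in the set `s`. -/
def eigSpan (T : H →L[ℂ] H) (s : Set ℝ) : Submodule ℂ H :=
  Submodule.span ℂ {u | u ≠ 0 ∧ ∃ μ ∈ s, T u = (μ : ℂ) • u}

/-! Every eigenvector `u` of `A` in `L(Δ)` has its eigenvalue strictly inside `(a, b)` (as
`a, b ∉ σ(A)`), so `Pₙ u` is an approximate eigenvector of the compression `Aₙ` whose spectral
components outside `Δ` are small: `u` lies within `O(dist(u, Lₙ))` of `Lₙ(Δ)`. Summing over an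
orthonormal eigenbasis of `L(Δ)` gives `δ(L(Δ), Lₙ(Δ)) → 0`. When moreover
`dim Lₙ(Δ) ≤ dim L(Δ)`, the projection `L(Δ) → Lₙ(Δ)` is bijective and
`δ(Lₙ(Δ), L(Δ)) ≤ δ / (1 - δ)` with `δ = δ(L(Δ), Lₙ(Δ))`, so there is no pollution.
Conversely, if `dim Lₙ(Δ) > d` then `Lₙ(Δ)` contains a unit vector orthogonal to `L(Δ)`, so
`δ(Lₙ(Δ), L(Δ)) ≥ 1`. -/

open Topology Module

section SubspaceDistance

variable {𝕜 F : Type*} [RCLike 𝕜] [NormedAddCommGroup F] [InnerProductSpace 𝕜 F]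

theorem infDist_eq_norm_starProjection_orthogonal (K : Submodule 𝕜 F) [K.HasOrthogonalProjection]
    (u : F) : infDist u K = ‖Kᗮ.starProjection u‖ := by
  rw [Submodule.starProjection_orthogonal_val, Submodule.starProjection_minimal, infDist_eq_iInf]
  simp only [dist_eq_norm, SetLike.coe_sort_coe]

theorem infDist_le_norm (K : Submodule 𝕜 F) (u : F) : infDist u K ≤ ‖u‖ := by
  simpa using infDist_le_dist_of_mem (x := u) K.zero_mem

end SubspaceDistance

theorem EuclideanSpace.mul_norm_le_norm_of_forall {𝕜 ι : Type*} [RCLike 𝕜] [Fintype ι]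
    {x y : EuclideanSpace 𝕜 ι} {r : ℝ} (hr : 0 ≤ r) (h : ∀ i, r * ‖y i‖ ≤ ‖x i‖) :
    r * ‖y‖ ≤ ‖x‖ := by
  rw [← pow_le_pow_iff_left₀ (by positivity) (norm_nonneg _) two_ne_zero, mul_pow,
    EuclideanSpace.norm_sq_eq, EuclideanSpace.norm_sq_eq, Finset.mul_sum]
  gcongr with i
  rw [← mul_pow]
  exact pow_le_pow_left₀ (by positivity) (h i) 2

theorem LinearMap.IsSymmetric.exists_mem_span_eigenvectors_mul_norm_sub_le {𝕜 E : Type*}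
    [RCLike 𝕜] [NormedAddCommGroup E] [InnerProductSpace 𝕜 E] [FiniteDimensional 𝕜 E]
    {T : E →ₗ[𝕜] E} (hT : T.IsSymmetric) (s : Set ℝ) {ν δ : ℝ} (hδ : 0 ≤ δ)
    (hδs : ∀ μ ∉ s, δ ≤ |μ - ν|) (w : E) :
    ∃ w' ∈ Submodule.span 𝕜 {v | ∃ μ ∈ s, T v = (μ : 𝕜) • v},
      δ * ‖w - w'‖ ≤ ‖T w - (ν : 𝕜) • w‖ := by
  classical
  set B := hT.eigenvectorBasis rfl
  set μ := hT.eigenvalues rfl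
  set c := B.repr w
  refine ⟨∑ i with μ i ∈ s, c i • B i,
    Submodule.sum_mem _ fun i hi => Submodule.smul_mem _ _ <| Submodule.subset_span
      ⟨μ i, (Finset.mem_filter.1 hi).2, hT.apply_eigenvectorBasis rfl i⟩, ?_⟩
  rw [← B.repr.norm_map, ← B.repr.norm_map]
  refine EuclideanSpace.mul_norm_le_norm_of_forall hδ fun i => ?_
  have hres : B.repr (T w - (ν : 𝕜) • w) i = ((μ i : 𝕜) - ν) * c i := by
    rw [map_sub, map_smul, PiLp.sub_apply, PiLp.smul_apply, smul_eq_mul,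
      hT.eigenvectorBasis_apply_self_apply, sub_mul]
  have htrunc : B.repr (w - ∑ j with μ j ∈ s, c j • B j) i = if μ i ∈ s then 0 else c i := by
    by_cases hi : μ i ∈ s <;> simp [c, hi, Pi.single_apply]
  rw [htrunc, hres]
  split_ifs with hi
  · rw [norm_zero, mul_zero]
    positivity
  · rw [norm_mul, ← RCLike.ofReal_sub, RCLike.norm_ofReal]
    exact mul_le_mul_of_nonneg_right (hδs _ hi) (norm_nonneg _)

section SubDelta

variable {F : Type*} [NormedAddCommGroup F] [InnerProductSpace ℂ F]

theorem subDelta_nonneg (L M : Submodule ℂ F) : 0 ≤ subDelta L M :=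
  Real.sSup_nonneg <| by
    rintro _ ⟨u, -, rfl⟩
    exact infDist_nonneg

theorem subDelta_le {L M : Submodule ℂ F} {ε : ℝ} (hε : 0 ≤ ε)
    (h : ∀ u ∈ L, ‖u‖ = 1 → infDist u M ≤ ε) : subDelta L M ≤ ε :=
  Real.sSup_le (by rintro _ ⟨u, ⟨hu, hu1⟩, rfl⟩; exact h u hu hu1) hε

theorem infDist_le_subDelta {L M : Submodule ℂ F} {u : F} (hu : u ∈ L) (hu1 : ‖u‖ = 1) :
    infDist u M ≤ subDelta L M := by
  refine le_csSup ⟨1, ?_⟩ ⟨u, ⟨hu, hu1⟩, rfl⟩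
  rintro _ ⟨v, ⟨-, hv1⟩, rfl⟩
  exact hv1 ▸ infDist_le_norm M v

theorem norm_starProjection_orthogonal_le_subDelta_mul {L M : Submodule ℂ F}
    [M.HasOrthogonalProjection] {u : F} (hu : u ∈ L) :
    ‖Mᗮ.starProjection u‖ ≤ subDelta L M * ‖u‖ := by
  rcases eq_or_ne u 0 with rfl | hu0
  · simp
  have hunit := infDist_le_subDelta (M := M) (L.smul_mem ((‖u‖ : ℂ)⁻¹) hu)
    (norm_smul_inv_norm hu0)
  rw [infDist_eq_norm_starProjection_orthogonal, map_smul, norm_smul, norm_inv,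
    Complex.norm_real, norm_norm, inv_mul_le_iff₀ (norm_pos_iff.2 hu0)] at hunit
  linarith

theorem one_le_subDelta_of_finrank_lt {L M : Submodule ℂ F} [FiniteDimensional ℂ L]
    [FiniteDimensional ℂ M] (h : finrank ℂ M < finrank ℂ L) : 1 ≤ subDelta L M := by
  let q : L →ₗ[ℂ] M := M.orthogonalProjectionOnto.toLinearMap ∘ₗ L.subtype
  obtain ⟨x, hxq, hx0⟩ :=
    (Submodule.ne_bot_iff _).1 (LinearMap.ker_ne_bot_of_finrank_lt (f := q) h)
  have hx0' : (x : F) ≠ 0 := by simpa using hx0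
  have hperp : Mᗮ.starProjection (x : F) = x := by
    rw [Submodule.starProjection_orthogonal_val, Submodule.starProjection_apply]
    change (x : F) - (q x : F) = x
    rw [LinearMap.mem_ker.1 hxq, Submodule.coe_zero, sub_zero]
  set u : F := (‖(x : F)‖ : ℂ)⁻¹ • (x : F)
  have hu1 : ‖u‖ = 1 := norm_smul_inv_norm hx0'
  calc 1 = ‖Mᗮ.starProjection u‖ := by rw [map_smul, hperp, hu1]
    _ = infDist u M := (infDist_eq_norm_starProjection_orthogonal M u).symm
    _ ≤ subDelta L M := infDist_le_subDelta (L.smul_mem _ x.2) hu1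

theorem subDelta_le_div_of_finrank_le {L M : Submodule ℂ F} [FiniteDimensional ℂ L]
    [FiniteDimensional ℂ M] (hdim : finrank ℂ M ≤ finrank ℂ L) (hδ : subDelta L M < 1) :
    subDelta M L ≤ subDelta L M / (1 - subDelta L M) := by
  set η := subDelta L M
  have hη : 0 ≤ η := subDelta_nonneg L M
  have hclose : ∀ x ∈ L, ‖x - M.starProjection x‖ ≤ η * ‖x‖ := fun x hx => by
    simpa using norm_starProjection_orthogonal_le_subDelta_mul (M := M) hx
  -- `hclose` makes the projection `L → M` injective, hence bijective as `dim M ≤ dim L`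
  let q : L →ₗ[ℂ] M := M.orthogonalProjectionOnto.toLinearMap ∘ₗ L.subtype
  have hinj : Function.Injective q := by
    refine (injective_iff_map_eq_zero q).2 fun x hx => ?_
    have hx' : M.starProjection (x : F) = 0 := by
      rw [Submodule.starProjection_apply]
      exact congrArg Subtype.val hx
    have := hclose x x.2
    rw [hx', sub_zero] at this
    exact (Submodule.coe_eq_zero).1 (norm_le_zero_iff.1 (by nlinarith [norm_nonneg (x : F)]))
  have hsurj : Function.Surjective q :=
    (LinearMap.injective_iff_surjective_of_finrank_eq_finrank
      (le_antisymm (LinearMap.finrank_le_finrank_of_injective hinj) hdim)).1 hinj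
  refine subDelta_le (div_nonneg hη (by linarith)) fun v hv hv1 => ?_
  obtain ⟨x, hx⟩ := hsurj ⟨v, hv⟩
  have hxv : ‖(x : F) - v‖ ≤ η * ‖(x : F)‖ := by
    have hqx : M.starProjection (x : F) = v := by
      rw [Submodule.starProjection_apply]
      exact congrArg Subtype.val hx
    simpa only [hqx] using hclose x x.2
  have hx_norm : (1 - η) * ‖(x : F)‖ ≤ 1 := by
    nlinarith [norm_le_norm_add_norm_sub' (x : F) v]
  calc infDist v L ≤ ‖v - x‖ := by simpa [dist_eq_norm] using infDist_le_dist_of_mem x.2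
    _ ≤ η * ‖(x : F)‖ := by rwa [norm_sub_rev]
    _ ≤ η / (1 - η) := by
      rw [le_div_iff₀ (by linarith)]
      nlinarith

theorem tendsto_subDelta_of_finrank_le {ι : Type*} {l : Filter ι} {L : Submodule ℂ F}
    [FiniteDimensional ℂ L] {M : ι → Submodule ℂ F} [∀ i, FiniteDimensional ℂ (M i)]
    (hdim : ∀ᶠ i in l, finrank ℂ (M i) ≤ finrank ℂ L)
    (h : Tendsto (fun i => subDelta L (M i)) l (𝓝 0)) :
    Tendsto (fun i => subDelta (M i) L) l (𝓝 0) := by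
  have hbound : Tendsto (fun i => subDelta L (M i) / (1 - subDelta L (M i))) l (𝓝 0) := by
    have := h.div (tendsto_const_nhds.sub h) (by norm_num : (1 : ℝ) - 0 ≠ 0)
    rwa [zero_div] at this
  refine tendsto_of_tendsto_of_tendsto_of_le_of_le' tendsto_const_nhds hbound
    (.of_forall fun i => subDelta_nonneg _ _) ?_
  filter_upwards [hdim, h.eventually (gt_mem_nhds one_pos)] with i hi hlt
  exact subDelta_le_div_of_finrank_le hi hlt

theorem subDelta_le_sum_infDist {ι : Type*} [Fintype ι] {L M : Submodule ℂ F}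
    [M.HasOrthogonalProjection] (b : OrthonormalBasis ι ℂ L) :
    subDelta L M ≤ ∑ i, infDist (b i : F) M := by
  refine subDelta_le (Finset.sum_nonneg fun i _ => infDist_nonneg) fun v hv hv1 => ?_
  have hv_sum : v = ∑ i, ⟪(b i : F), v⟫_ℂ • (b i : F) := by
    simpa using (congrArg Subtype.val (b.sum_repr' ⟨v, hv⟩)).symm
  have hcoeff : ∀ i, ‖⟪(b i : F), v⟫_ℂ‖ ≤ 1 := fun i => by
    have hbi : ‖(b i : F)‖ = 1 := b.orthonormal.1 i
    simpa [hv1, hbi] using norm_inner_le_norm (𝕜 := ℂ) (b i : F) v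
  simp only [infDist_eq_norm_starProjection_orthogonal]
  calc ‖Mᗮ.starProjection v‖ = ‖∑ i, ⟪(b i : F), v⟫_ℂ • Mᗮ.starProjection (b i : F)‖ := by
        conv_lhs => rw [hv_sum]
        simp only [map_sum, map_smul]
    _ ≤ ∑ i, ‖⟪(b i : F), v⟫_ℂ • Mᗮ.starProjection (b i : F)‖ := norm_sum_le _ _
    _ ≤ ∑ i, ‖Mᗮ.starProjection (b i : F)‖ := Finset.sum_le_sum fun i _ => by
        rw [norm_smul]
        exact mul_le_of_le_one_left (norm_nonneg _) (hcoeff i)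

end SubDelta

section Galerkin

variable {F : Type*} [NormedAddCommGroup F] [InnerProductSpace ℂ F] (A : F →L[ℂ] F)

instance finiteDimensional_galerkinSubspace (K : Submodule ℂ F) [FiniteDimensional ℂ K]
    (a b : ℝ) : FiniteDimensional ℂ (galerkinSubspace A K a b) :=
  Submodule.finiteDimensional_of_le (Submodule.span_le.2 fun _ ⟨_, _, hu⟩ => hu.1)

def galerkinCompression (K : Submodule ℂ F) [K.HasOrthogonalProjection] : K →ₗ[ℂ] K :=
  K.orthogonalProjectionOnto.toLinearMap ∘ₗ (A : F →ₗ[ℂ] F) ∘ₗ K.subtype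

variable {A}

theorem galerkinCompression_apply (K : Submodule ℂ F) [K.HasOrthogonalProjection] (x : K) :
    galerkinCompression A K x = K.orthogonalProjectionOnto (A x) :=
  rfl

theorem isSymmetric_galerkinCompression (hA : (A : F →ₗ[ℂ] F).IsSymmetric) (K : Submodule ℂ F)
    [K.HasOrthogonalProjection] : (galerkinCompression A K).IsSymmetric := fun x y => by
  simp only [galerkinCompression_apply, Submodule.inner_orthogonalProjectionOnto_eq_of_mem_right,
    Submodule.inner_orthogonalProjectionOnto_eq_of_mem_left]
  exact hA x y

theorem isGalerkinEigenpair_of_galerkinCompression {K : Submodule ℂ F} [K.HasOrthogonalProjection]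
    {μ : ℝ} {v : K} (hv : v ≠ 0) (h : galerkinCompression A K v = (μ : ℂ) • v) :
    IsGalerkinEigenpair A K μ v := by
  refine ⟨v.2, by simpa using hv, fun w hw => ?_⟩
  have := congrArg (fun z : K => ⟪z, (⟨w, hw⟩ : K)⟫_ℂ) h
  simpa [galerkinCompression_apply, inner_smul_left] using this

theorem mul_infDist_galerkinSubspace_le (hA : (A : F →ₗ[ℂ] F).IsSymmetric) (K : Submodule ℂ F)
    [FiniteDimensional ℂ K] {a b ν δ : ℝ} (hδ : 0 ≤ δ) (hδs : ∀ μ ∉ Set.Icc a b, δ ≤ |μ - ν|)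
    {u : F} (hu : A u = (ν : ℂ) • u) :
    δ * infDist u (galerkinSubspace A K a b) ≤ (δ + ‖A‖ + |ν|) * infDist u K := by
  set p : K := K.orthogonalProjectionOnto u with hp
  obtain ⟨w, hw, hpw⟩ := (isSymmetric_galerkinCompression hA K)
    |>.exists_mem_span_eigenvectors_mul_norm_sub_le (Set.Icc a b) hδ hδs p
  have hspan : Submodule.span ℂ {v | ∃ μ ∈ Set.Icc a b, galerkinCompression A K v = (μ : ℂ) • v}
      ≤ (galerkinSubspace A K a b).comap K.subtype := by
    refine Submodule.span_le.2 ?_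
    rintro v ⟨μ, hμ, hv⟩
    rcases eq_or_ne v 0 with rfl | hv0
    · exact zero_mem _
    · exact Submodule.subset_span ⟨μ, hμ, isGalerkinEigenpair_of_galerkinCompression hv0 hv⟩
  have hwG : (w : F) ∈ galerkinSubspace A K a b := hspan hw
  have hdist : infDist u K = ‖u - p‖ := by
    rw [infDist_eq_norm_starProjection_orthogonal, Submodule.starProjection_orthogonal_val,
      Submodule.starProjection_apply]
  have hres : ‖galerkinCompression A K p - (ν : ℂ) • p‖ ≤ (‖A‖ + |ν|) * ‖u - p‖ := by
    have : galerkinCompression A K p - (ν : ℂ) • p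
        = K.orthogonalProjectionOnto (A ((p : F) - u) - (ν : ℂ) • ((p : F) - u)) := by
      simp only [galerkinCompression_apply, map_sub, map_smul, hu,
        Submodule.orthogonalProjectionOnto_mem_subspace_eq_self, ← hp, sub_self, smul_zero,
        sub_zero]
    rw [this]
    refine (K.norm_orthogonalProjectionOnto_apply_le _).trans ?_
    calc ‖A ((p : F) - u) - (ν : ℂ) • ((p : F) - u)‖
        ≤ ‖A‖ * ‖(p : F) - u‖ + |ν| * ‖(p : F) - u‖ := by
          refine (norm_sub_le _ _).trans (add_le_add (A.le_opNorm _) ?_)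
          rw [norm_smul, Complex.norm_real, Real.norm_eq_abs]
      _ = (‖A‖ + |ν|) * ‖u - p‖ := by rw [norm_sub_rev]; ring
  have hpw' : ‖(p : F) - w‖ = ‖p - w‖ := by rw [← Submodule.coe_sub, Submodule.norm_coe]
  calc δ * infDist u (galerkinSubspace A K a b) ≤ δ * (‖u - p‖ + ‖(p : F) - w‖) := by
        gcongr
        simpa [dist_eq_norm] using (infDist_le_dist_of_mem hwG).trans (dist_triangle u p w)
    _ ≤ (δ + ‖A‖ + |ν|) * infDist u K := by
        rw [hdist, hpw']
        linarith [hpw.trans hres]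

theorem tendsto_infDist_galerkinSubspace (hA : (A : F →ₗ[ℂ] F).IsSymmetric) {ι : Type*}
    {l : Filter ι} {L : ι → Submodule ℂ F} [∀ i, FiniteDimensional ℂ (L i)] {a b ν : ℝ}
    (hν : ν ∈ Set.Ioo a b) {u : F} (hu : A u = (ν : ℂ) • u)
    (hL : Tendsto (fun i => infDist u (L i)) l (𝓝 0)) :
    Tendsto (fun i => infDist u (galerkinSubspace A (L i) a b)) l (𝓝 0) := by
  set δ := min (ν - a) (b - ν)
  have hδ : 0 < δ := lt_min (by linarith [hν.1]) (by linarith [hν.2])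
  have hδs : ∀ μ ∉ Set.Icc a b, δ ≤ |μ - ν| := fun μ hμ => by
    rcases not_and_or.1 hμ with h | h
    · rw [abs_sub_comm]
      exact (min_le_left _ _).trans (by linarith [le_abs_self (ν - μ), not_le.1 h])
    · exact (min_le_right _ _).trans (by linarith [le_abs_self (μ - ν), not_le.1 h])
  have hC := hL.const_mul ((δ + ‖A‖ + |ν|) / δ)
  rw [mul_zero] at hC
  refine squeeze_zero (fun _ => infDist_nonneg) (fun i => ?_) hC
  rw [div_mul_eq_mul_div, le_div_iff₀ hδ, mul_comm]
  exact mul_infDist_galerkinSubspace_le hA (L i) hδ.le hδs hu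

end Galerkin

section SpectralProjection

variable {A : H →L[ℂ] H} {a b : ℝ} {f : ℝ → ℝ}

theorem isIdempotentElem_cfc_of_eq_one_of_eq_zero (hf : ContinuousOn f (spectrum ℝ A))
    (hf1 : ∀ x ∈ spectrum ℝ A ∩ Set.Icc a b, f x = 1)
    (hf0 : ∀ x ∈ spectrum ℝ A \ Set.Icc a b, f x = 0) : IsIdempotentElem (cfc f A) := by
  rw [IsIdempotentElem, ← cfc_mul f f A]
  refine cfc_congr fun x hx => ?_
  by_cases hab : x ∈ Set.Icc a b
  · simp [hf1 x ⟨hx, hab⟩]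
  · simp [hf0 x ⟨hx, hab⟩]

theorem mem_Ioo_of_cfc_apply_eq_self (hA : IsSelfAdjoint A) (ha : a ∉ spectrum ℝ A)
    (hb : b ∉ spectrum ℝ A) (hf : ContinuousOn f (spectrum ℝ A))
    (hf0 : ∀ x ∈ spectrum ℝ A \ Set.Icc a b, f x = 0) {u : H} (hu : cfc f A u = u) (hu0 : u ≠ 0)
    {ν : ℝ} (hν : A u = (ν : ℂ) • u) : ν ∈ Set.Ioo a b := by
  by_contra hν_ab
  have hνσ : ν ∉ spectrum ℝ A ∩ Set.Icc a b := fun h =>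
    hν_ab ⟨h.2.1.lt_of_ne fun e => ha (e ▸ h.1), h.2.2.lt_of_ne fun e => hb (e ▸ h.1)⟩
  have hzero : ∀ᶠ x in 𝓝[spectrum ℝ A] ν, f x = 0 := by
    have : (spectrum ℝ A ∩ Set.Icc a b)ᶜ ∈ 𝓝 ν :=
      ((spectrum.isClosed A).inter isClosed_Icc).isOpen_compl.mem_nhds hνσ
    filter_upwards [self_mem_nhdsWithin, nhdsWithin_le_nhds this] with x hx hx'
    exact hf0 x ⟨hx, fun h => hx' ⟨hx, h⟩⟩
  -- `f` vanishes on the spectrum near `ν`, so it factors as `g(x) (x - ν)` there with `g`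
  -- continuous (at `x = ν` Lean's `f ν / 0 = 0` is the right value); hence `E = g(A) (A - ν)`
  set g : ℝ → ℝ := fun x => f x / (x - ν)
  have hg : ContinuousOn g (spectrum ℝ A) := fun x hx => by
    rcases eq_or_ne x ν with rfl | hne
    · exact (continuousWithinAt_const (b := (0 : ℝ))).congr_of_eventuallyEq
        (hzero.mono fun y hy => by simp [g, hy]) (by simp [g])
    · exact (hf x hx).div (continuousWithinAt_id.sub continuousWithinAt_const) (sub_ne_zero.2 hne)
  have hfg : cfc f A = cfc g A * (A - algebraMap ℝ _ ν) := by
    calc cfc f A = cfc (fun x => g x * (x - ν)) A := cfc_congr fun x hx => by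
          rcases eq_or_ne x ν with rfl | hne
          · simp [hzero.self_of_nhdsWithin hx]
          · simp [g, sub_ne_zero.2 hne]
      _ = cfc g A * (A - algebraMap ℝ _ ν) := by
          rw [cfc_mul g (fun x => x - ν) A, cfc_sub (fun x => x) (fun _ => ν) A, cfc_id' ℝ A,
            cfc_const ν A]
  apply hu0
  rw [← hu, hfg]
  simp [hν, Algebra.algebraMap_eq_smul_one, Complex.coe_smul]

theorem exists_orthonormalBasis_range_eigenvectors (hA : IsSelfAdjoint A)
    (ha : a ∉ spectrum ℝ A) (hb : b ∉ spectrum ℝ A) (hf : ContinuousOn f (spectrum ℝ A))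
    (hf1 : ∀ x ∈ spectrum ℝ A ∩ Set.Icc a b, f x = 1)
    (hf0 : ∀ x ∈ spectrum ℝ A \ Set.Icc a b, f x = 0) {E : H →L[ℂ] H} (hE : E = cfc f A)
    [FiniteDimensional ℂ (LinearMap.range (E : H →ₗ[ℂ] H))] :
    ∃ B : OrthonormalBasis (Fin (finrank ℂ (LinearMap.range (E : H →ₗ[ℂ] H)))) ℂ
        (LinearMap.range (E : H →ₗ[ℂ] H)),
      ∀ i, ∃ ν ∈ Set.Ioo a b, A (B i) = (ν : ℂ) • (B i : H) := by
  have hcomm : A * E = E * A := by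
    simpa only [hE, cfc_id' ℝ A] using (cfc_commute_cfc (fun x => x) f A).eq
  have hinv : ∀ v ∈ LinearMap.range (E : H →ₗ[ℂ] H), A v ∈ LinearMap.range (E : H →ₗ[ℂ] H) := by
    rintro _ ⟨w, rfl⟩
    exact ⟨A w, congrArg (· w) hcomm.symm⟩
  have hidem : IsIdempotentElem (E : H →ₗ[ℂ] H) :=
    ContinuousLinearMap.IsIdempotentElem.toLinearMap
      (hE ▸ isIdempotentElem_cfc_of_eq_one_of_eq_zero hf hf1 hf0)
  have hT := hA.isSymmetric.restrict_invariant hinv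
  refine ⟨hT.eigenvectorBasis rfl, fun i => ?_⟩
  set v := hT.eigenvectorBasis rfl i
  have heig : A v = (hT.eigenvalues rfl i : ℂ) • (v : H) :=
    congrArg Subtype.val (hT.apply_eigenvectorBasis rfl i)
  have hv0 : (v : H) ≠ 0 := by simpa using (hT.eigenvectorBasis rfl).orthonormal.ne_zero i
  have hfix : E v = v := (LinearMap.IsIdempotentElem.mem_range_iff hidem).1 v.2
  exact ⟨_, mem_Ioo_of_cfc_apply_eq_self hA ha hb hf hf0 (hE ▸ hfix) hv0 heig, heig⟩

end SpectralProjection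

theorem tendsto_subDelta_range_galerkinSubspace {A : H →L[ℂ] H} (hA : IsSelfAdjoint A) {a b : ℝ}
    (ha : a ∉ spectrum ℝ A) (hb : b ∉ spectrum ℝ A) {f : ℝ → ℝ}
    (hf : ContinuousOn f (spectrum ℝ A)) (hf1 : ∀ x ∈ spectrum ℝ A ∩ Set.Icc a b, f x = 1)
    (hf0 : ∀ x ∈ spectrum ℝ A \ Set.Icc a b, f x = 0) {E : H →L[ℂ] H} (hE : E = cfc f A)
    [FiniteDimensional ℂ (LinearMap.range (E : H →ₗ[ℂ] H))] {ι : Type*} {l : Filter ι}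
    {L : ι → Submodule ℂ H} [∀ i, FiniteDimensional ℂ (L i)]
    (hL : ∀ u : H, Tendsto (fun i => infDist u (L i)) l (𝓝 0)) :
    Tendsto (fun i => subDelta (LinearMap.range (E : H →ₗ[ℂ] H)) (galerkinSubspace A (L i) a b))
      l (𝓝 0) := by
  obtain ⟨B, hB⟩ := exists_orthonormalBasis_range_eigenvectors hA ha hb hf hf1 hf0 hE
  have hB_approx : ∀ i, Tendsto (fun n => infDist (B i : H) (galerkinSubspace A (L n) a b))
      l (𝓝 0) := fun i =>
    let ⟨_, hν, heig⟩ := hB i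
    tendsto_infDist_galerkinSubspace hA.isSymmetric hν heig (hL _)
  refine squeeze_zero (fun _ => subDelta_nonneg _ _) (fun _ => subDelta_le_sum_infDist B) ?_
  simpa using tendsto_finsetSum Finset.univ fun i _ => hB_approx i

theorem stmt6_general
    (A : H →L[ℂ] H) (hA : IsSelfAdjoint A)
    (a b : ℝ)
    (ha : a ∉ spectrum ℝ A) (hb : b ∉ spectrum ℝ A)
    (f : ℝ → ℝ) (hf : ContinuousOn f (spectrum ℝ A))
    (hf1 : ∀ x ∈ spectrum ℝ A ∩ Set.Icc a b, f x = 1)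
    (hf0 : ∀ x ∈ spectrum ℝ A \ Set.Icc a b, f x = 0)
    (E : H →L[ℂ] H) (hE : E = cfc f A)
    (d : ℕ)
    [FiniteDimensional ℂ (LinearMap.range (E : H →ₗ[ℂ] H))]
    (hd : Module.finrank ℂ (LinearMap.range (E : H →ₗ[ℂ] H)) = d)
    (L : ℕ → Submodule ℂ H) [∀ n, FiniteDimensional ℂ (L n)]
    (hL : ∀ u : H, Tendsto (fun n => Metric.infDist u ((L n : Set H))) atTop (nhds 0)) :
    -- spectral pollution occurs in `Δ` iff `dim Lₙⱼ(Δ) > dim L(Δ) = d` along a subsequence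
    ¬ Tendsto
        (fun n => subDelta (galerkinSubspace A (L n) a b) (LinearMap.range (E : H →ₗ[ℂ] H)))
        atTop (nhds 0) ↔
      ∃ nj : ℕ → ℕ, StrictMono nj ∧
        ∀ j, d < Module.finrank ℂ (galerkinSubspace A (L (nj j)) a b) := by
  subst hd
  constructor
  · intro hpol
    by_contra hsub
    have hdim : ∀ᶠ n in atTop, finrank ℂ (galerkinSubspace A (L n) a b)
        ≤ finrank ℂ (LinearMap.range (E : H →ₗ[ℂ] H)) := by
      by_contra h
      exact hsub (extraction_of_frequently_atTop ((not_eventually.1 h).mono fun _ => lt_of_not_ge))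
    exact hpol (tendsto_subDelta_of_finrank_le hdim
      (tendsto_subDelta_range_galerkinSubspace hA ha hb hf hf1 hf0 hE hL))
  · rintro ⟨nj, hnj, hgt⟩ hT
    obtain ⟨j, hj⟩ := ((hT.comp hnj.tendsto_atTop).eventually (gt_mem_nhds one_pos)).exists
    exact (one_le_subDelta_of_finrank_lt (hgt j)).not_gt hj

theorem stmt6
    (A : H →L[ℂ] H) (hA : IsSelfAdjoint A)
    (a b : ℝ) (hab : a < b)
    (ha : a ∉ spectrum ℝ A) (hb : b ∉ spectrum ℝ A)
    (f : ℝ → ℝ) (hf : ContinuousOn f (spectrum ℝ A))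
    (hf1 : ∀ x ∈ spectrum ℝ A ∩ Set.Icc a b, f x = 1)
    (hf0 : ∀ x ∈ spectrum ℝ A \ Set.Icc a b, f x = 0)
    (E : H →L[ℂ] H) (hE : E = cfc f A)
    (d : ℕ) (hd1 : 1 ≤ d)
    [FiniteDimensional ℂ (LinearMap.range (E : H →ₗ[ℂ] H))]
    (hd : Module.finrank ℂ (LinearMap.range (E : H →ₗ[ℂ] H)) = d)
    (L : ℕ → Submodule ℂ H) [∀ n, FiniteDimensional ℂ (L n)]
    (hL : ∀ u : H, Tendsto (fun n => Metric.infDist u ((L n : Set H))) atTop (nhds 0)) :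
    -- spectral pollution occurs in `Δ` iff `dim Lₙⱼ(Δ) > dim L(Δ) = d` along a subsequence
    ¬ Tendsto
        (fun n => subDelta (galerkinSubspace A (L n) a b) (LinearMap.range (E : H →ₗ[ℂ] H)))
        atTop (nhds 0) ↔
      ∃ nj : ℕ → ℕ, StrictMono nj ∧
        ∀ j, d < Module.finrank ℂ (galerkinSubspace A (L (nj j)) a b) :=
  stmt6_general A hA a b ha hb f hf hf1 hf0 E hE d hd L hL

end
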